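/- Let s ≥ 0 and ε > 0. For f ∈ H^{max(s+1, 3/2+ε)}(𝕋) and g ∈ H^{s+1}(𝕋), the commutator satisfies ‖⟨∂x⟩^s(f ∂x g) − f ⟨∂x⟩^s ∂x g‖_{L²} ≤ C ( ‖f‖_{H^{3/2+ε}} ‖g‖_{H^s} + ‖f‖_{H^{s+1}} ‖g‖_{H^{1/2+ε}} ). -/

import Mathlib

noncomputable section

/-- Japanese bracket of an integer: ⟨m⟩ = √(1 + m²). -/
def jb (m : ℤ) : ℝ := Real.sqrt (1 + (m : ℝ) ^ 2)

/-- Sobolev H^s norm of a sequence of Fourier coefficients. -/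
def hsNorm (s : ℝ) (a : ℤ → ℂ) : ℝ := Real.sqrt (∑' k : ℤ, jb k ^ (2 * s) * ‖a k‖ ^ 2)

/-- Fourier coefficients of the commutator ⟨∂x⟩^s(f ∂x g) − f ⟨∂x⟩^s ∂x g:
its n-th coefficient is Σ_k (⟨n⟩^s − ⟨k⟩^s) (ik) f̂(n−k) ĝ(k). -/
def commCoeff (s : ℝ) (f g : ℤ → ℂ) : ℤ → ℂ := fun n =>
  ∑' k : ℤ, ((jb n ^ s - jb k ^ s : ℝ) : ℂ) * (Complex.I * (k : ℂ)) * f (n - k) * g k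

open scoped ENNReal

/-!
The n-th coefficient of the commutator is `Σ_k K(n, k) f̂(n - k) ĝ(k)` with
`K(n, k) = (⟨n⟩^s - ⟨k⟩^s) i k`. If `2|n - k| < |k|`, then `⟨n⟩` and `⟨k⟩` are comparable and
the mean value theorem gives `|K(n, k)| ≲ ⟨n - k⟩ ⟨k⟩^s`; otherwise `⟨n⟩, ⟨k⟩ ≲ ⟨n - k⟩` and
`|K(n, k)| ≲ ⟨n - k⟩^(s + 1 - β) ⟨k⟩^β` for every `β ∈ [0, 1]`. Either bound dominates the
commutator by a convolution of a weighted `|f̂|` with a weighted `|ĝ|`, which Young's inequality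
`ℓ¹ * ℓ² ⊆ ℓ²` controls, and by Cauchy–Schwarz the `ℓ¹` norm of `⟨m⟩^a |f̂(m)|` is at most a
constant times the `H^t` norm of `f` as soon as `t > a + 1/2`.
Taking `β = min 1 (1/2 + ε)` yields the two terms of the estimate. When `1/2 + ε > s + 1` the
norm `‖g‖_{H^{1/2+ε}}` may be infinite (and `hsNorm` is then `0`), so there `β = 0` is used and
both terms are bounded by `‖f‖_{H^{3/2+ε}} ‖g‖_{H^s}`.
The sums are estimated in `ℝ≥0∞`, where no summability has to be established beforehand.
-/

lemma jb_pos (m : ℤ) : 0 < jb m := Real.sqrt_pos.2 (by positivity)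

lemma abs_le_jb (m : ℤ) : |(m : ℝ)| ≤ jb m :=
  Real.le_sqrt_of_sq_le (by rw [sq_abs]; linarith)

lemma one_le_jb (m : ℤ) : 1 ≤ jb m :=
  Real.one_le_sqrt.2 (by nlinarith [sq_nonneg (m : ℝ)])

lemma jb_le_mul_jb {m n : ℤ} {c : ℝ} (hc : 1 ≤ c) (h : |(m : ℝ)| ≤ c * |(n : ℝ)|) :
    jb m ≤ c * jb n := by
  have hn : jb n ^ 2 = 1 + (n : ℝ) ^ 2 := Real.sq_sqrt (by positivity)
  refine Real.sqrt_le_iff.2 ⟨by nlinarith [jb_pos n], ?_⟩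
  rw [mul_pow, hn, ← sq_abs (m : ℝ), ← sq_abs (n : ℝ)]
  nlinarith [abs_nonneg (m : ℝ), abs_nonneg (n : ℝ)]

lemma jb_eq_norm (m : ℤ) : jb m = ‖((1 : ℝ) + (m : ℝ) * Complex.I : ℂ)‖ := by
  rw [Complex.norm_add_mul_I, one_pow, jb]

lemma abs_jb_sub_jb_le (m n : ℤ) : |jb m - jb n| ≤ |(m : ℝ) - n| := by
  have := abs_norm_sub_norm_le ((1 : ℝ) + (m : ℝ) * Complex.I : ℂ) ((1 : ℝ) + (n : ℝ) * Complex.I)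
  rwa [← jb_eq_norm, ← jb_eq_norm, add_sub_add_left_eq_sub, ← sub_mul, ← Complex.ofReal_sub,
    Complex.norm_mul, Complex.norm_I, mul_one, Complex.norm_real, Real.norm_eq_abs] at this

lemma rpow_sub_one_le_of_mem_Icc {s B x : ℝ} (hs : 0 ≤ s) (hB : 0 < B)
    (hx : x ∈ Set.Icc (B / 2) (2 * B)) : x ^ (s - 1) ≤ 2 ^ (s + 1) * B ^ (s - 1) := by
  have hx0 : 0 < x := by linarith [hx.1]
  rw [Real.rpow_sub_one hx0.ne', Real.rpow_sub_one hB.ne', Real.rpow_add_one two_ne_zero,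
    div_le_iff₀ hx0]
  calc x ^ s ≤ (2 * B) ^ s := Real.rpow_le_rpow hx0.le hx.2 hs
    _ = 2 ^ s * 2 * (B ^ s / B) * (B / 2) := by
      rw [Real.mul_rpow zero_le_two hB.le]; field_simp
    _ ≤ 2 ^ s * 2 * (B ^ s / B) * x := by gcongr; exact hx.1

lemma abs_rpow_sub_rpow_le_of_mem_Icc {s B x y : ℝ} (hs : 0 ≤ s) (hB : 0 < B)
    (hx : x ∈ Set.Icc (B / 2) (2 * B)) (hy : y ∈ Set.Icc (B / 2) (2 * B)) :
    |x ^ s - y ^ s| ≤ s * 2 ^ (s + 1) * B ^ (s - 1) * |x - y| := by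
  have hpos : ∀ z ∈ Set.Icc (B / 2) (2 * B), 0 < z := fun z hz => by linarith [hz.1]
  have hderiv : ∀ z ∈ Set.Icc (B / 2) (2 * B),
      HasDerivWithinAt (fun z : ℝ => z ^ s) (s * z ^ (s - 1)) (Set.Icc (B / 2) (2 * B)) z :=
    fun z hz => (Real.hasDerivAt_rpow_const (Or.inl (hpos z hz).ne')).hasDerivWithinAt
  have hbound : ∀ z ∈ Set.Icc (B / 2) (2 * B), ‖s * z ^ (s - 1)‖ ≤ s * 2 ^ (s + 1) * B ^ (s - 1) :=
    fun z hz => by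
      rw [Real.norm_of_nonneg (by have := hpos z hz; positivity), mul_assoc]
      exact mul_le_mul_of_nonneg_left (rpow_sub_one_le_of_mem_Icc hs hB hz) hs
  simpa only [Real.norm_eq_abs] using
    (convex_Icc _ _).norm_image_sub_le_of_norm_hasDerivWithin_le hderiv hbound hy hx

lemma abs_jb_rpow_sub_mul_le_of_lt {s : ℝ} (hs : 0 ≤ s) {n k : ℤ}
    (h : 2 * |(n : ℝ) - k| < |(k : ℝ)|) :
    |jb n ^ s - jb k ^ s| * |(k : ℝ)| ≤ s * 2 ^ (s + 1) * (jb (n - k) * jb k ^ s) := by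
  have hB := jb_pos k
  have hnk : |jb n - jb k| ≤ |(n : ℝ) - k| := abs_jb_sub_jb_le n k
  have hk := abs_le_jb k
  have hmem : jb n ∈ Set.Icc (jb k / 2) (2 * jb k) := by
    constructor <;> linarith [(abs_le.1 hnk).1, (abs_le.1 hnk).2]
  have hdiff : |(n : ℝ) - k| ≤ jb (n - k) := by exact_mod_cast abs_le_jb (n - k)
  have hBs : jb k ^ (s - 1) * jb k = jb k ^ s := by
    rw [← Real.rpow_add_one hB.ne', sub_add_cancel]
  calc |jb n ^ s - jb k ^ s| * |(k : ℝ)|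
      ≤ (s * 2 ^ (s + 1) * jb k ^ (s - 1) * jb (n - k)) * jb k := by
        refine mul_le_mul ?_ hk (abs_nonneg _) (by have := jb_pos (n - k); positivity)
        exact (abs_rpow_sub_rpow_le_of_mem_Icc (y := jb k) hs hB hmem
          ⟨by linarith, by linarith⟩).trans (by gcongr; exact hnk.trans hdiff)
    _ = s * 2 ^ (s + 1) * (jb (n - k) * jb k ^ s) := by rw [← hBs]; ring

lemma abs_jb_rpow_sub_mul_le_of_le {s β : ℝ} (hs : 0 ≤ s) (hβ0 : 0 ≤ β) (hβ1 : β ≤ 1)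
    {n k : ℤ} (h : |(k : ℝ)| ≤ 2 * |(n : ℝ) - k|) :
    |jb n ^ s - jb k ^ s| * |(k : ℝ)| ≤ 2 * 3 ^ s * (jb (n - k) ^ (s + 1 - β) * jb k ^ β) := by
  have hD := jb_pos (n - k)
  have hB := jb_pos k
  have hcast : |((n - k : ℤ) : ℝ)| = |(n : ℝ) - k| := by push_cast; rfl
  have hk2 : jb k ≤ 2 * jb (n - k) := jb_le_mul_jb one_le_two (by rwa [hcast])
  have hn3 : jb n ≤ 3 * jb (n - k) := jb_le_mul_jb (by norm_num) (by
    rw [hcast]; linarith [abs_sub_abs_le_abs_sub (n : ℝ) k])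
  have hpow : |jb n ^ s - jb k ^ s| ≤ 3 ^ s * jb (n - k) ^ s := by
    rw [← Real.mul_rpow (by norm_num) hD.le]
    have h1 : jb n ^ s ≤ (3 * jb (n - k)) ^ s := Real.rpow_le_rpow (jb_pos n).le hn3 hs
    have h2 : jb k ^ s ≤ (3 * jb (n - k)) ^ s :=
      Real.rpow_le_rpow hB.le (by linarith) hs
    rw [abs_sub_le_iff]
    constructor <;> linarith [Real.rpow_nonneg (jb_pos n).le s, Real.rpow_nonneg hB.le s]
  have hsplit : |(k : ℝ)| ≤ 2 * jb (n - k) ^ (1 - β) * jb k ^ β := by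
    calc |(k : ℝ)| ≤ jb k ^ (1 - β) * jb k ^ β := by
          rw [← Real.rpow_add hB, sub_add_cancel, Real.rpow_one]; exact abs_le_jb k
      _ ≤ (2 * jb (n - k)) ^ (1 - β) * jb k ^ β := by gcongr
      _ ≤ 2 * jb (n - k) ^ (1 - β) * jb k ^ β := by
          rw [Real.mul_rpow zero_le_two hD.le]
          gcongr
          exact Real.rpow_le_self_of_one_le one_le_two (by linarith)
  calc |jb n ^ s - jb k ^ s| * |(k : ℝ)|
      ≤ (3 ^ s * jb (n - k) ^ s) * (2 * jb (n - k) ^ (1 - β) * jb k ^ β) := by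
        gcongr
    _ = 2 * 3 ^ s * (jb (n - k) ^ (s + 1 - β) * jb k ^ β) := by
        rw [show s + 1 - β = s + (1 - β) by ring, Real.rpow_add hD]; ring

theorem exists_abs_jb_rpow_sub_mul_le {s β : ℝ} (hs : 0 ≤ s) (hβ0 : 0 ≤ β) (hβ1 : β ≤ 1) :
    ∃ C > 0, ∀ n k : ℤ, |jb n ^ s - jb k ^ s| * |(k : ℝ)| ≤
      C * (jb (n - k) ^ (1 : ℝ) * jb k ^ s + jb (n - k) ^ (s + 1 - β) * jb k ^ β) := by
  refine ⟨s * 2 ^ (s + 1) + 2 * 3 ^ s, by positivity, fun n k => ?_⟩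
  have hT₁ : 0 ≤ jb (n - k) * jb k ^ s := by have := jb_pos (n - k); have := jb_pos k; positivity
  have hT₂ : 0 ≤ jb (n - k) ^ (s + 1 - β) * jb k ^ β := by
    have := jb_pos (n - k); have := jb_pos k; positivity
  have hc₁ : 0 ≤ s * 2 ^ (s + 1) := by positivity
  have hc₂ : (0 : ℝ) ≤ 2 * 3 ^ s := by positivity
  rw [Real.rpow_one]
  rcases lt_or_ge (2 * |(n : ℝ) - k|) |(k : ℝ)| with h | h
  · nlinarith [abs_jb_rpow_sub_mul_le_of_lt hs h, mul_nonneg hc₂ hT₁, mul_nonneg hc₂ hT₂]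
  · nlinarith [abs_jb_rpow_sub_mul_le_of_le hs hβ0 hβ1 h, mul_nonneg hc₁ hT₁, mul_nonneg hc₁ hT₂]

namespace ENNReal

theorem two_mul_le_add_sq (a b : ℝ≥0∞) : 2 * a * b ≤ a ^ 2 + b ^ 2 := by
  rcases eq_or_ne a ⊤ with rfl | ha
  · simp
  rcases eq_or_ne b ⊤ with rfl | hb
  · simp
  lift a to NNReal using ha
  lift b to NNReal using hb
  exact_mod_cast _root_.two_mul_le_add_sq a b

theorem add_sq_le (a b : ℝ≥0∞) : (a + b) ^ 2 ≤ 2 * (a ^ 2 + b ^ 2) :=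
  calc (a + b) ^ 2 = a ^ 2 + b ^ 2 + 2 * a * b := by ring
    _ ≤ a ^ 2 + b ^ 2 + (a ^ 2 + b ^ 2) := add_le_add_right (two_mul_le_add_sq a b) _
    _ = 2 * (a ^ 2 + b ^ 2) := by ring

theorem sq_tsum_mul_le {ι : Type*} (w b : ι → ℝ≥0∞) :
    (∑' i, w i * b i) ^ 2 ≤ (∑' i, w i) * ∑' i, w i * b i ^ 2 := by
  refine (ENNReal.mul_le_mul_iff_right two_ne_zero ofNat_ne_top).1 ?_
  calc 2 * (∑' i, w i * b i) ^ 2 = ∑' i, ∑' j, w i * w j * (2 * b i * b j) := by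
        rw [sq, ← ENNReal.tsum_mul_right, ← ENNReal.tsum_mul_left]
        refine tsum_congr fun i => ?_
        rw [← ENNReal.tsum_mul_left, ← ENNReal.tsum_mul_left]
        exact tsum_congr fun j => by ring
    _ ≤ ∑' i, ∑' j, (w i * b i ^ 2 * w j + w i * (w j * b j ^ 2)) := by
        gcongr with i j
        calc w i * w j * (2 * b i * b j) ≤ w i * w j * (b i ^ 2 + b j ^ 2) := by
              gcongr; exact two_mul_le_add_sq _ _
          _ = _ := by ring
    _ = 2 * ((∑' i, w i) * ∑' i, w i * b i ^ 2) := by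
        simp_rw [ENNReal.tsum_add, ENNReal.tsum_mul_left, ENNReal.tsum_mul_right]
        ring

theorem tsum_sq_tsum_sub_mul_le {G : Type*} [AddCommGroup G] (A B : G → ℝ≥0∞) :
    ∑' n, (∑' k, A (n - k) * B k) ^ 2 ≤ (∑' k, A k) ^ 2 * ∑' k, B k ^ 2 := by
  have hleft (n : G) : ∑' k, A (n - k) = ∑' k, A k := (Equiv.subLeft n).tsum_eq A
  have hright (k : G) : ∑' n, A (n - k) = ∑' n, A n := (Equiv.subRight k).tsum_eq A
  calc ∑' n, (∑' k, A (n - k) * B k) ^ 2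
      ≤ ∑' n, (∑' k, A (n - k)) * ∑' k, A (n - k) * B k ^ 2 :=
        ENNReal.tsum_le_tsum fun n => sq_tsum_mul_le _ _
    _ = (∑' k, A k) * ∑' k, B k ^ 2 * ∑' n, A (n - k) := by
        simp_rw [hleft, ENNReal.tsum_mul_left]
        rw [ENNReal.tsum_comm]
        simp_rw [← ENNReal.tsum_mul_left, mul_comm]
    _ = (∑' k, A k) ^ 2 * ∑' k, B k ^ 2 := by
        simp_rw [hright, ENNReal.tsum_mul_right]
        ring

end ENNReal

lemma ofReal_jb_ne_zero (m : ℤ) : ENNReal.ofReal (jb m) ≠ 0 := by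
  simpa using jb_pos m

lemma one_le_ofReal_jb (m : ℤ) : 1 ≤ ENNReal.ofReal (jb m) :=
  ENNReal.one_le_ofReal.2 (one_le_jb m)

def jbWeight (t : ℝ) (a : ℤ → ℂ) (k : ℤ) : ℝ≥0∞ := ENNReal.ofReal (jb k) ^ t * ‖a k‖ₑ

lemma jbWeight_eq_ofReal (t : ℝ) (a : ℤ → ℂ) (k : ℤ) :
    jbWeight t a k = ENNReal.ofReal (jb k ^ t * ‖a k‖) := by
  rw [jbWeight, ENNReal.ofReal_mul (Real.rpow_nonneg (jb_pos k).le t),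
    ENNReal.ofReal_rpow_of_pos (jb_pos k), ofReal_norm]

lemma jbWeight_sq (t : ℝ) (a : ℤ → ℂ) (k : ℤ) :
    jbWeight t a k ^ 2 = ENNReal.ofReal (jb k ^ (2 * t) * ‖a k‖ ^ 2) := by
  have hk := jb_pos k
  rw [jbWeight_eq_ofReal, ← ENNReal.ofReal_pow (by positivity), mul_pow,
    ← Real.rpow_mul_natCast hk.le]
  norm_num [mul_comm]

def hsENormSq (t : ℝ) (a : ℤ → ℂ) : ℝ≥0∞ := ∑' k, jbWeight t a k ^ 2

lemma hsENormSq_mono {t t' : ℝ} (h : t ≤ t') (a : ℤ → ℂ) : hsENormSq t a ≤ hsENormSq t' a :=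
  ENNReal.tsum_le_tsum fun k => by
    unfold jbWeight
    gcongr
    exact one_le_ofReal_jb k

def MemHs (t : ℝ) (a : ℤ → ℂ) : Prop := Summable fun k : ℤ => jb k ^ (2 * t) * ‖a k‖ ^ 2

lemma MemHs.mono {t t' : ℝ} {a : ℤ → ℂ} (ha : MemHs t' a) (h : t ≤ t') : MemHs t a :=
  ha.of_nonneg_of_le (fun k => by have := jb_pos k; positivity) fun k => by
    gcongr
    exact one_le_jb k

lemma hsNorm_nonneg (t : ℝ) (a : ℤ → ℂ) : 0 ≤ hsNorm t a := Real.sqrt_nonneg _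

lemma hsENormSq_eq_ofReal {t : ℝ} {a : ℤ → ℂ} (ha : MemHs t a) :
    hsENormSq t a = ENNReal.ofReal (hsNorm t a ^ 2) := by
  have hnn (k : ℤ) : 0 ≤ jb k ^ (2 * t) * ‖a k‖ ^ 2 := by have := jb_pos k; positivity
  rw [hsNorm, Real.sq_sqrt (tsum_nonneg hnn), ENNReal.ofReal_tsum_of_nonneg hnn ha, hsENormSq]
  simp_rw [jbWeight_sq]

lemma memHs_and_hsNorm_le_of_hsENormSq_le {t M : ℝ} {a : ℤ → ℂ} (hM : 0 ≤ M)
    (h : hsENormSq t a ≤ ENNReal.ofReal (M ^ 2)) : MemHs t a ∧ hsNorm t a ≤ M := by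
  have hfin : ∑' k, ENNReal.ofReal (jb k ^ (2 * t) * ‖a k‖ ^ 2) ≠ ⊤ := by
    simp_rw [← jbWeight_sq]
    exact ne_top_of_le_ne_top ENNReal.ofReal_ne_top h
  have ha : MemHs t a := by
    unfold MemHs
    convert ENNReal.summable_toReal hfin with k
    rw [ENNReal.toReal_ofReal (by have := jb_pos k; positivity)]
  rw [hsENormSq_eq_ofReal ha, ENNReal.ofReal_le_ofReal_iff (by positivity)] at h
  exact ⟨ha, (pow_le_pow_iff_left₀ (hsNorm_nonneg t a) hM two_ne_zero).1 h⟩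

lemma summable_jb_rpow {p : ℝ} (hp : p < -1) : Summable fun m : ℤ => jb m ^ p := by
  refine Summable.of_norm_bounded_eventually (Real.summable_abs_int_rpow (b := -p) (by linarith)) ?_
  filter_upwards [(Set.finite_singleton (0 : ℤ)).compl_mem_cofinite] with m hm
  have hm' : (0 : ℝ) < |(m : ℝ)| := by simpa using hm
  rw [neg_neg, Real.norm_of_nonneg (Real.rpow_nonneg (jb_pos m).le p)]
  exact Real.rpow_le_rpow_of_nonpos hm' (abs_le_jb m) (by linarith)

lemma tsum_ofReal_jb_rpow_ne_top {p : ℝ} (hp : p < -1) :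
    ∑' m : ℤ, ENNReal.ofReal (jb m) ^ p ≠ ⊤ := by
  simp_rw [ENNReal.ofReal_rpow_of_pos (jb_pos _)]
  rw [← ENNReal.ofReal_tsum_of_nonneg (fun m => Real.rpow_nonneg (jb_pos m).le p)
    (summable_jb_rpow hp)]
  exact ENNReal.ofReal_ne_top

lemma sq_tsum_jbWeight_le (a t : ℝ) (h : ℤ → ℂ) :
    (∑' m, jbWeight a h m) ^ 2 ≤ (∑' m, ENNReal.ofReal (jb m) ^ (2 * (a - t))) * hsENormSq t h := by
  have hadd (m : ℤ) (x y : ℝ) :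
      ENNReal.ofReal (jb m) ^ x * ENNReal.ofReal (jb m) ^ y = ENNReal.ofReal (jb m) ^ (x + y) :=
    (ENNReal.rpow_add _ _ (ofReal_jb_ne_zero m) ENNReal.ofReal_ne_top).symm
  have hmul (m : ℤ) : ENNReal.ofReal (jb m) ^ (2 * (a - t)) * jbWeight (2 * t - a) h m =
      jbWeight a h m := by
    rw [jbWeight, jbWeight, ← mul_assoc, hadd]
    ring_nf
  have hsq (m : ℤ) : ENNReal.ofReal (jb m) ^ (2 * (a - t)) * jbWeight (2 * t - a) h m ^ 2 =
      jbWeight t h m ^ 2 := by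
    rw [jbWeight, jbWeight, mul_pow, mul_pow, ← ENNReal.rpow_mul_natCast,
      ← ENNReal.rpow_mul_natCast, ← mul_assoc, hadd]
    ring_nf
  calc (∑' m, jbWeight a h m) ^ 2
      = (∑' m, ENNReal.ofReal (jb m) ^ (2 * (a - t)) * jbWeight (2 * t - a) h m) ^ 2 := by
        simp_rw [hmul]
    _ ≤ _ := ENNReal.sq_tsum_mul_le _ _
    _ = _ := by simp_rw [hsq]; rfl

section Commutator

variable {s a₁ b₁ a₂ b₂ C : ℝ}

lemma enorm_commCoeff_le (hC : 0 ≤ C)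
    (hK : ∀ n k : ℤ, |jb n ^ s - jb k ^ s| * |(k : ℝ)| ≤
      C * (jb (n - k) ^ a₁ * jb k ^ b₁ + jb (n - k) ^ a₂ * jb k ^ b₂))
    (f g : ℤ → ℂ) (n : ℤ) :
    ‖commCoeff s f g n‖ₑ ≤ ENNReal.ofReal C *
      (∑' k, jbWeight a₁ f (n - k) * jbWeight b₁ g k +
        ∑' k, jbWeight a₂ f (n - k) * jbWeight b₂ g k) := by
  rw [← ENNReal.tsum_add, ← ENNReal.tsum_mul_left]
  refine enorm_tsum_le_tsum_enorm.trans (ENNReal.tsum_le_tsum fun k => ?_)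
  have hnorm : ‖((jb n ^ s - jb k ^ s : ℝ) : ℂ) * (Complex.I * (k : ℂ)) * f (n - k) * g k‖ =
      |jb n ^ s - jb k ^ s| * |(k : ℝ)| * (‖f (n - k)‖ * ‖g k‖) := by
    simp only [norm_mul, Complex.norm_real, Real.norm_eq_abs, Complex.norm_I, one_mul,
      Complex.norm_intCast]
    ring
  have := jb_pos k
  have := jb_pos (n - k)
  simp only [jbWeight_eq_ofReal]
  rw [← ofReal_norm, hnorm, ← ENNReal.ofReal_mul (by positivity),
    ← ENNReal.ofReal_mul (by positivity), ← ENNReal.ofReal_add (by positivity) (by positivity),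
    ← ENNReal.ofReal_mul hC]
  refine ENNReal.ofReal_le_ofReal ?_
  calc |jb n ^ s - jb k ^ s| * |(k : ℝ)| * (‖f (n - k)‖ * ‖g k‖)
      ≤ C * (jb (n - k) ^ a₁ * jb k ^ b₁ + jb (n - k) ^ a₂ * jb k ^ b₂) *
          (‖f (n - k)‖ * ‖g k‖) := mul_le_mul_of_nonneg_right (hK n k) (by positivity)
    _ = _ := by ring

theorem hsENormSq_commCoeff_le (hC : 0 ≤ C)
    (hK : ∀ n k : ℤ, |jb n ^ s - jb k ^ s| * |(k : ℝ)| ≤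
      C * (jb (n - k) ^ a₁ * jb k ^ b₁ + jb (n - k) ^ a₂ * jb k ^ b₂))
    (f g : ℤ → ℂ) :
    hsENormSq 0 (commCoeff s f g) ≤ 2 * ENNReal.ofReal C ^ 2 *
      ((∑' k, jbWeight a₁ f k) ^ 2 * hsENormSq b₁ g +
        (∑' k, jbWeight a₂ f k) ^ 2 * hsENormSq b₂ g) := by
  set X₁ := fun n => ∑' k, jbWeight a₁ f (n - k) * jbWeight b₁ g k
  set X₂ := fun n => ∑' k, jbWeight a₂ f (n - k) * jbWeight b₂ g k
  calc hsENormSq 0 (commCoeff s f g)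
      ≤ ∑' n, 2 * ENNReal.ofReal C ^ 2 * (X₁ n ^ 2 + X₂ n ^ 2) :=
        ENNReal.tsum_le_tsum fun n => by
          rw [jbWeight, ENNReal.rpow_zero, one_mul]
          calc ‖commCoeff s f g n‖ₑ ^ 2 ≤ (ENNReal.ofReal C * (X₁ n + X₂ n)) ^ 2 := by
                gcongr; exact enorm_commCoeff_le hC hK f g n
            _ ≤ ENNReal.ofReal C ^ 2 * (2 * (X₁ n ^ 2 + X₂ n ^ 2)) := by
                rw [mul_pow]; gcongr; exact ENNReal.add_sq_le _ _
            _ = _ := by ring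
    _ = 2 * ENNReal.ofReal C ^ 2 * (∑' n, X₁ n ^ 2 + ∑' n, X₂ n ^ 2) := by
        rw [ENNReal.tsum_mul_left, ENNReal.tsum_add]
    _ ≤ _ := by
        gcongr
        · exact ENNReal.tsum_sq_tsum_sub_mul_le _ _
        · exact ENNReal.tsum_sq_tsum_sub_mul_le _ _

theorem exists_hsNorm_commCoeff_le (hC : 0 < C)
    (hK : ∀ n k : ℤ, |jb n ^ s - jb k ^ s| * |(k : ℝ)| ≤
      C * (jb (n - k) ^ a₁ * jb k ^ b₁ + jb (n - k) ^ a₂ * jb k ^ b₂))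
    {t₁ t₂ u₁ u₂ : ℝ} (ht₁ : a₁ + 1 / 2 < t₁) (ht₂ : a₂ + 1 / 2 < t₂)
    (hu₁ : b₁ ≤ u₁) (hu₂ : b₂ ≤ u₂) :
    ∃ K > 0, ∀ f g : ℤ → ℂ, MemHs t₁ f → MemHs t₂ f → MemHs u₁ g → MemHs u₂ g →
      MemHs 0 (commCoeff s f g) ∧
      hsNorm 0 (commCoeff s f g) ≤ K * (hsNorm t₁ f * hsNorm u₁ g + hsNorm t₂ f * hsNorm u₂ g) := by
  set Z₁ := ∑' m : ℤ, ENNReal.ofReal (jb m) ^ (2 * (a₁ - t₁))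
  set Z₂ := ∑' m : ℤ, ENNReal.ofReal (jb m) ^ (2 * (a₂ - t₂))
  have hZ : Z₁ + Z₂ ≠ ⊤ := ENNReal.add_ne_top.2
    ⟨tsum_ofReal_jb_rpow_ne_top (by linarith), tsum_ofReal_jb_rpow_ne_top (by linarith)⟩
  have hZ₁ : 1 ≤ Z₁ := le_trans (by simp [jb]) (ENNReal.le_tsum (0 : ℤ))
  set Z := (Z₁ + Z₂).toReal
  have hZpos : 0 < Z := ENNReal.toReal_pos (by positivity) hZ
  refine ⟨C * √(2 * Z), by positivity, fun f g hf₁ hf₂ hg₁ hg₂ => ?_⟩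
  set x₁ := hsNorm t₁ f
  set x₂ := hsNorm t₂ f
  set y₁ := hsNorm u₁ g
  set y₂ := hsNorm u₂ g
  have hxy₁ : 0 ≤ x₁ * y₁ := mul_nonneg (hsNorm_nonneg _ _) (hsNorm_nonneg _ _)
  have hxy₂ : 0 ≤ x₂ * y₂ := mul_nonneg (hsNorm_nonneg _ _) (hsNorm_nonneg _ _)
  refine memHs_and_hsNorm_le_of_hsENormSq_le (by positivity) ?_
  calc hsENormSq 0 (commCoeff s f g)
      ≤ 2 * ENNReal.ofReal C ^ 2 * ((∑' k, jbWeight a₁ f k) ^ 2 * hsENormSq u₁ g +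
          (∑' k, jbWeight a₂ f k) ^ 2 * hsENormSq u₂ g) :=
        (hsENormSq_commCoeff_le hC.le hK f g).trans (by gcongr <;> exact hsENormSq_mono ‹_› g)
    _ ≤ 2 * ENNReal.ofReal C ^ 2 * ((Z₁ + Z₂) * hsENormSq t₁ f * hsENormSq u₁ g +
          (Z₁ + Z₂) * hsENormSq t₂ f * hsENormSq u₂ g) := by
        gcongr
        · exact (sq_tsum_jbWeight_le _ _ _).trans (by gcongr; exact le_self_add)
        · exact (sq_tsum_jbWeight_le _ _ _).trans (by gcongr; exact le_add_self)
    _ = ENNReal.ofReal (2 * C ^ 2 * Z * ((x₁ * y₁) ^ 2 + (x₂ * y₂) ^ 2)) := by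
        rw [hsENormSq_eq_ofReal hf₁, hsENormSq_eq_ofReal hf₂, hsENormSq_eq_ofReal hg₁,
          hsENormSq_eq_ofReal hg₂, ← ENNReal.ofReal_toReal hZ]
        rw [ENNReal.ofReal_mul (by positivity), ENNReal.ofReal_mul (by positivity),
          ENNReal.ofReal_mul (by positivity), ENNReal.ofReal_pow hC.le, ENNReal.ofReal_ofNat,
          ENNReal.ofReal_add (by positivity) (by positivity), mul_pow, mul_pow,
          ENNReal.ofReal_mul (by positivity), ENNReal.ofReal_mul (by positivity)]
        ring
    _ ≤ ENNReal.ofReal ((C * √(2 * Z) * (x₁ * y₁ + x₂ * y₂)) ^ 2) := by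
        refine ENNReal.ofReal_le_ofReal ?_
        rw [mul_pow _ (x₁ * y₁ + x₂ * y₂), mul_pow C, Real.sq_sqrt (by positivity)]
        nlinarith [mul_nonneg (mul_nonneg (sq_nonneg C) hZpos.le) (mul_nonneg hxy₁ hxy₂)]

end Commutator

/-- Commutator estimate:
‖⟨∂x⟩^s(f ∂x g) − f ⟨∂x⟩^s ∂x g‖_{L²}
  ≤ C (‖f‖_{H^{3/2+ε}} ‖g‖_{H^s} + ‖f‖_{H^{s+1}} ‖g‖_{H^{1/2+ε}}). -/
theorem stmt_3 (s ε : ℝ) (hs : 0 ≤ s) (hε : 0 < ε) :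
    ∃ C > 0, ∀ f g : ℤ → ℂ,
      Summable (fun k : ℤ => jb k ^ (2 * max (s + 1) (3 / 2 + ε)) * ‖f k‖ ^ 2) →
      Summable (fun k : ℤ => jb k ^ (2 * (s + 1)) * ‖g k‖ ^ 2) →
      Summable (fun n : ℤ => ‖commCoeff s f g n‖ ^ 2) ∧
      hsNorm 0 (commCoeff s f g)
        ≤ C * (hsNorm (3 / 2 + ε) f * hsNorm s g
              + hsNorm (s + 1) f * hsNorm (1 / 2 + ε) g) := by
  have hf₁ {f : ℤ → ℂ} (hf : MemHs (max (s + 1) (3 / 2 + ε)) f) : MemHs (3 / 2 + ε) f :=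
    hf.mono (le_max_right _ _)
  have hgs {g : ℤ → ℂ} (hg : MemHs (s + 1) g) : MemHs s g := hg.mono (by linarith)
  have hcomm {c : ℤ → ℂ} (hc : MemHs 0 c) : Summable fun n => ‖c n‖ ^ 2 := by
    simpa [MemHs] using hc
  rcases le_or_gt ε (s + 1 / 2) with hreg | hreg
  · have hβ : 1 / 2 < min 1 (1 / 2 + ε) := lt_min (by norm_num) (by linarith)
    obtain ⟨C, hC, hK⟩ := exists_abs_jb_rpow_sub_mul_le hs (by linarith) (min_le_left 1 (1 / 2 + ε))
    obtain ⟨K, hK0, hest⟩ := exists_hsNorm_commCoeff_le hC hK (t₁ := 3 / 2 + ε) (t₂ := s + 1)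
      (by linarith) (by linarith) le_rfl (min_le_right _ _)
    refine ⟨K, hK0, fun f g hf hg => ?_⟩
    obtain ⟨hc, hbound⟩ := hest f g (hf₁ hf) (MemHs.mono hf (le_max_left _ _)) (hgs hg)
      (MemHs.mono hg (by linarith))
    exact ⟨hcomm hc, hbound⟩
  · obtain ⟨C, hC, hK⟩ := exists_abs_jb_rpow_sub_mul_le hs le_rfl zero_le_one
    obtain ⟨K, hK0, hest⟩ := exists_hsNorm_commCoeff_le hC hK (t₁ := 3 / 2 + ε) (t₂ := 3 / 2 + ε)
      (by linarith) (by linarith) le_rfl hs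
    refine ⟨2 * K, by positivity, fun f g hf hg => ?_⟩
    obtain ⟨hc, hbound⟩ := hest f g (hf₁ hf) (hf₁ hf) (hgs hg) (hgs hg)
    have := mul_nonneg hK0.le (mul_nonneg (hsNorm_nonneg (s + 1) f) (hsNorm_nonneg (1 / 2 + ε) g))
    exact ⟨hcomm hc, by linarith⟩
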